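/- arXiv:1710.08766 — 5 statements merged into one kernel-verified Lean document; each statement's English description precedes it below -/
import Mathlib

section
/- For every Fσ ideal I on ℕ there is a closed set K ⊆ 2^ℕ such that I = I_K, where I_K is the ideal generated by K: x ∈ I_K if and only if x ⊆ y₁ ∪ … ∪ y_n for some finitely many y₁,…,y_n ∈ K. -/
open Set

/-- The Cantor space `2^ℕ`: subsets of `ℕ` identified with their characteristic functions. -/
abbrev Cantor : Type := ℕ → Bool

/-- The subset of `ℕ` coded by a point of Cantor space. -/
def toSet (x : Cantor) : Set ℕ := {n | x n = true}

/-- `s ⊑ z` : the finite set `s` is an initial segment of `z ⊆ ℕ`,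
i.e. `s = z ∩ {0,1,…,n}` for some `n`. -/
def InitSeg (s : Finset ℕ) (z : Set ℕ) : Prop := ∃ n : ℕ, (s : Set ℕ) = z ∩ Set.Iic n

/-- `s ⊑ t` for finite sets `s, t`. -/
def InitSegF (s t : Finset ℕ) : Prop := ∃ n : ℕ, s = t ∩ Finset.Iic n

/-- `B` is a front on the set `x ⊆ ℕ`: all members of `B` are subsets of `x`, any two
members of `B` are `⊑`-incomparable, and every infinite subset of `x` has an initial
segment in `B`. -/
def IsFrontOn (B : Set (Finset ℕ)) (x : Set ℕ) : Prop :=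
  (∀ s ∈ B, (s : Set ℕ) ⊆ x) ∧
  (∀ s ∈ B, ∀ t ∈ B, InitSegF s t → s = t) ∧
  (∀ y : Set ℕ, y ⊆ x → y.Infinite → ∃ s ∈ B, InitSeg s y)

/-- `y` is `F`-homogeneous: either every infinite subset of `y` has an initial segment
in `F`, or no finite subset of `y` belongs to `F`. -/
def Homog (F : Set (Finset ℕ)) (y : Set ℕ) : Prop :=
  (∀ z : Set ℕ, z ⊆ y → z.Infinite → ∃ s ∈ F, InitSeg s z) ∨
  (∀ s : Finset ℕ, (s : Set ℕ) ⊆ y → s ∉ F)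

/-- `I` is an ideal on `ℕ`: a family of subsets of `ℕ` closed under taking subsets
and under finite unions. -/
def IsIdeal (I : Set Cantor) : Prop :=
  (∀ x ∈ I, ∀ y : Cantor, toSet y ⊆ toSet x → y ∈ I) ∧
  (∀ x ∈ I, ∀ y ∈ I, (fun n => x n || y n) ∈ I)

/-- `I` is an `Fσ` subset of the Cantor space. -/
def IsFsigma (I : Set Cantor) : Prop :=
  ∃ C : ℕ → Set Cantor, (∀ n, IsClosed (C n)) ∧ I = ⋃ n, C n

/-- A family `C` is tall if every infinite subset of `ℕ` contains an infinite member of `C`. -/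
def Tall (C : Set Cantor) : Prop :=
  ∀ x : Cantor, (toSet x).Infinite → ∃ y ∈ C, (toSet y).Infinite ∧ toSet y ⊆ toSet x

/-- `S` is a Borel selector for the family `C`. -/
def IsSelector (C : Set Cantor) (S : Cantor → Cantor) : Prop :=
  Measurable S ∧ ∀ x : Cantor,
    toSet (S x) ⊆ toSet x ∧ ((toSet x).Infinite → (toSet (S x)).Infinite) ∧ S x ∈ C

/-- A Borel ideal `I` is uniformly selective. -/
def UnifSelective (I : Set Cantor) : Prop :=
  ∃ F : (ℕ → Cantor) → Cantor, Measurable F ∧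
    ∀ xs : ℕ → Cantor, (∀ n, xs n ∉ I) → (∀ n, toSet (xs (n + 1)) ⊆ toSet (xs n)) →
      F xs ∉ I ∧ ∀ n ∈ toSet (F xs), toSet (F xs) \ Set.Iic n ⊆ toSet (xs n)

/-- A Borel ideal `I` is uniformly `p⁺`. -/
def UnifPplus (I : Set Cantor) : Prop :=
  ∃ G : (ℕ → Cantor) → Cantor, Measurable G ∧
    ∀ xs : ℕ → Cantor, (∀ n, xs n ∉ I) → (∀ n, toSet (xs (n + 1)) ⊆ toSet (xs n)) →
      G xs ∉ I ∧ ∀ n, (toSet (G xs) \ toSet (xs n)).Finite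

/-- `(t n)_{n∈ℕ}` is a partition of `x` into finite sets. -/
def FinPartition (x : Cantor) (t : ℕ → Cantor) : Prop :=
  (∀ n, (toSet (t n)).Finite) ∧
  (∀ m n, m ≠ n → Disjoint (toSet (t m)) (toSet (t n))) ∧
  (⋃ n, toSet (t n)) = toSet x

/-- A Borel ideal `I` is uniformly `q⁺`. -/
def UnifQplus (I : Set Cantor) : Prop :=
  ∃ F : Cantor × (ℕ → Cantor) → Cantor, Measurable F ∧
    ∀ (x : Cantor) (t : ℕ → Cantor), x ∉ I → FinPartition x t →
      toSet (F (x, t)) ⊆ toSet x ∧ F (x, t) ∉ I ∧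
      ∀ n, (toSet (F (x, t)) ∩ toSet (t n)).Subsingleton

/-- The ideal `I` is `q⁺`. -/
def Qplus (I : Set Cantor) : Prop :=
  ∀ (x : Cantor) (t : ℕ → Cantor), x ∉ I → FinPartition x t →
    ∃ y : Cantor, toSet y ⊆ toSet x ∧ y ∉ I ∧
      ∀ n, (toSet y ∩ toSet (t n)).Subsingleton

/-- The ideal `I` is selective. -/
def Selective (I : Set Cantor) : Prop :=
  ∀ xs : ℕ → Cantor, (∀ n, xs n ∉ I) → (∀ n, toSet (xs (n + 1)) ⊆ toSet (xs n)) →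
    ∃ x : Cantor, x ∉ I ∧ ∀ n ∈ toSet x, toSet x \ Set.Iic n ⊆ toSet (xs n)

/-- The ideal generated by `K`: `x ∈ IdealGen K` iff `x ⊆ y₁ ∪ … ∪ y_n` for some
`y₁, …, y_n ∈ K`. -/
def IdealGen (K : Set Cantor) : Set Cantor :=
  {x | ∃ l : List Cantor, l ≠ [] ∧ (∀ y ∈ l, y ∈ K) ∧ toSet x ⊆ ⋃ y ∈ l, toSet y}

/-- `↓K = {x : x ⊆ y for some y ∈ K}`. -/
def Down (K : Set Cantor) : Set Cantor := {x | ∃ y ∈ K, toSet x ⊆ toSet y}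

/-- `C` is hereditary: closed under taking subsets. -/
def Hereditary (C : Set Cantor) : Prop :=
  ∀ x ∈ C, ∀ y : Cantor, toSet y ⊆ toSet x → y ∈ C

/-- `A ⊆ 2^ℕ` is `Σ¹₂`: the projection of a coanalytic subset of `2^ℕ × ℕ^ℕ`. -/
def Sigma12 (A : Set Cantor) : Prop :=
  ∃ C : Set (Cantor × (ℕ → ℕ)), MeasureTheory.AnalyticSet Cᶜ ∧
    A = {x | ∃ w : ℕ → ℕ, (x, w) ∈ C}

/-- `A ⊆ 2^ℕ` is `Π¹₂`: the complement of a `Σ¹₂` set. -/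
def Pi12 (A : Set Cantor) : Prop := Sigma12 Aᶜ

/-!
Write `I = ⋃ₙ Cₙ` with `Cₙ` closed and let `Dₙ` be the hereditary closure of
`{∅} ∪ C₀ ∪ ⋯ ∪ Cₙ`; it is closed by compactness and contained in `I`. Take for `K` the set of
those `x` such that `{n} ∈ I` and `x ∩ (n, ∞) ∈ Dₙ` for every `n ∈ x`, an intersection of closed
conditions. Every member of `K` is `{min x} ∪ (x ∩ (min x, ∞))`, hence lies in `I`. Conversely, if
`x ∈ Cₘ` then `x ∩ (m, ∞) ∈ K`, because the condition is only imposed at points `n > m`, where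
`Cₘ ⊆ Dₙ`; together with the singletons `{k}`, `k ∈ x`, `k ≤ m`, it covers `x`.
-/

open Classical in
noncomputable def ofSet (s : Set ℕ) : Cantor := fun n => decide (n ∈ s)

@[simp]
lemma mem_toSet {x : Cantor} {n : ℕ} : n ∈ toSet x ↔ x n = true := Iff.rfl

@[simp]
lemma toSet_ofSet (s : Set ℕ) : toSet (ofSet s) = s := by
  ext n; simp [toSet, ofSet]

lemma isClopen_setOf_apply_eq_true (n : ℕ) : IsClopen {x : Cantor | x n = true} :=
  (isClopen_discrete {true}).preimage (continuous_apply n)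

open Classical in
lemma continuous_ofSet_toSet_inter (s : Set ℕ) : Continuous fun x => ofSet (toSet x ∩ s) := by
  refine continuous_pi fun n => ?_
  have h : (fun x : Cantor => ofSet (toSet x ∩ s) n) = (fun b => decide (b = true ∧ n ∈ s)) ∘
      (fun x : Cantor => x n) := by
    funext x; simp [ofSet, toSet]
  rw [h]
  exact continuous_of_discreteTopology.comp (continuous_apply n)

lemma isClosed_setOf_toSet_subset : IsClosed {p : Cantor × Cantor | toSet p.1 ⊆ toSet p.2} := by
  simp only [Set.subset_def, mem_toSet, Set.ofPred_forall]
  exact isClosed_iInter fun n => isClosed_imp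
    ((isClopen_setOf_apply_eq_true n).isOpen.preimage continuous_fst)
    ((isClopen_setOf_apply_eq_true n).isClosed.preimage continuous_snd)

section Down

variable {C D : Set Cantor}

lemma IsClosed.down (hC : IsClosed C) : IsClosed (Down C) := by
  have h : Down C = Prod.fst '' {p : Cantor × Cantor | toSet p.1 ⊆ toSet p.2 ∧ p.2 ∈ C} := by
    ext x
    constructor
    · rintro ⟨y, hy, hxy⟩
      exact ⟨(x, y), ⟨hxy, hy⟩, rfl⟩
    · rintro ⟨⟨x, y⟩, ⟨hxy, hy⟩, rfl⟩
      exact ⟨y, hy, hxy⟩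
  rw [h]
  exact isClosedMap_fst_of_compactSpace _
    (isClosed_setOf_toSet_subset.inter (hC.preimage continuous_snd))

lemma subset_down : C ⊆ Down C := fun x hx => ⟨x, hx, subset_rfl⟩

lemma down_mono (h : C ⊆ D) : Down C ⊆ Down D := fun _ ⟨y, hy, hxy⟩ => ⟨y, h hy, hxy⟩

lemma hereditary_down : Hereditary (Down C) :=
  fun _ ⟨z, hz, hxz⟩ _ hyx => ⟨z, hz, hyx.trans hxz⟩

lemma Hereditary.down_subset (hD : Hereditary D) (h : C ⊆ D) : Down C ⊆ D :=
  fun _ ⟨y, hy, hxy⟩ => hD y (h hy) _ hxy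

end Down

namespace IsIdeal

variable {I K : Set Cantor}

lemma hereditary (hI : IsIdeal I) : Hereditary I := hI.1

lemma mem_of_subset_union (hI : IsIdeal I) {x y z : Cantor} (hx : x ∈ I) (hy : y ∈ I)
    (h : toSet z ⊆ toSet x ∪ toSet y) : z ∈ I := by
  refine hI.hereditary _ (hI.2 x hx y hy) z fun n hn => ?_
  rcases h hn with h | h <;> simp_all

lemma mem_of_subset_biUnion (hI : IsIdeal I) (hne : I.Nonempty) (l : List Cantor)
    (hl : ∀ y ∈ l, y ∈ I) {z : Cantor} (hz : toSet z ⊆ ⋃ y ∈ l, toSet y) : z ∈ I := by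
  induction l generalizing z with
  | nil =>
    obtain ⟨x, hx⟩ := hne
    exact hI.hereditary x hx z fun n hn => by simpa using hz hn
  | cons y l ih =>
    simp only [List.forall_mem_cons] at hl
    have hrest : ofSet (toSet z \ toSet y) ∈ I :=
      ih hl.2 fun n hn => by
        simp only [toSet_ofSet, Set.mem_sdiff] at hn
        simpa [hn.2] using hz hn.1
    exact hI.mem_of_subset_union hl.1 hrest fun n hn => by by_cases n ∈ toSet y <;> simp_all

lemma idealGen_subset (hI : IsIdeal I) (hK : K ⊆ I) : IdealGen K ⊆ I := by
  rintro z ⟨l, hl, hlK, hz⟩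
  obtain ⟨y, hy⟩ := List.exists_mem_of_ne_nil l hl
  exact hI.mem_of_subset_biUnion ⟨y, hK (hlK y hy)⟩ l (fun y hy => hK (hlK y hy)) hz

end IsIdeal

lemma idealGen_empty : IdealGen ∅ = ∅ := by
  ext x
  simp only [IdealGen, Set.mem_empty_iff_false, Set.mem_ofPred_eq, iff_false]
  rintro ⟨l, hl, hlK, -⟩
  obtain ⟨y, hy⟩ := List.exists_mem_of_ne_nil l hl
  exact hlK y hy

section GeneratingSet

variable (I : Set Cantor) (D : ℕ → Set Cantor)

def generatingSet : Set Cantor :=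
  {x | ∀ n ∈ toSet x, ofSet {n} ∈ I ∧ ofSet (toSet x ∩ Set.Ioi n) ∈ D n}

variable {I D}

lemma isClosed_generatingSet (hD : ∀ n, IsClosed (D n)) : IsClosed (generatingSet I D) := by
  simp only [generatingSet, mem_toSet, Set.ofPred_forall]
  exact isClosed_iInter fun n => isClosed_imp (isClopen_setOf_apply_eq_true n).isOpen
    (isClosed_const.inter ((hD n).preimage (continuous_ofSet_toSet_inter _)))

lemma generatingSet_subset (hI : IsIdeal I) (hne : I.Nonempty) (hDI : ∀ n, D n ⊆ I) :
    generatingSet I D ⊆ I := by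
  intro x hx
  rcases (toSet x).eq_empty_or_nonempty with h | h
  · obtain ⟨y, hy⟩ := hne
    exact hI.hereditary y hy x (by simp [h])
  · have hmin := hx _ (Nat.sInf_mem h)
    refine hI.mem_of_subset_union hmin.1 (hDI _ hmin.2) fun n hn => ?_
    rcases (Nat.sInf_le hn).eq_or_lt with h | h <;> simp_all

lemma ofSet_inter_Ioi_mem_generatingSet (hI : Hereditary I) (hD : Monotone D)
    (hDh : ∀ n, Hereditary (D n)) {x : Cantor} {m : ℕ} (hx : x ∈ I) (hxD : x ∈ D m) :
    ofSet (toSet x ∩ Set.Ioi m) ∈ generatingSet I D := by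
  intro n hn
  simp only [toSet_ofSet, Set.mem_inter_iff, Set.mem_Ioi] at hn
  exact ⟨hI x hx _ (by simpa using hn.1),
    hDh n x (hD hn.2.le hxD) _ (by simp only [toSet_ofSet]; exact fun k hk => hk.1.1)⟩

lemma ofSet_singleton_mem_generatingSet {n : ℕ} (hn : ofSet {n} ∈ I) (hD : ofSet ∅ ∈ D n) :
    ofSet {n} ∈ generatingSet I D := by
  intro k hk
  obtain rfl : k = n := by simpa using hk
  simpa using ⟨hn, hD⟩

lemma mem_idealGen_generatingSet (hI : Hereditary I) (hD : Monotone D)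
    (hDh : ∀ n, Hereditary (D n)) (hD₀ : ∀ n, ofSet ∅ ∈ D n) {x : Cantor} {m : ℕ}
    (hx : x ∈ I) (hxD : x ∈ D m) : x ∈ IdealGen (generatingSet I D) := by
  refine ⟨ofSet (toSet x ∩ Set.Ioi m) :: ((List.range (m + 1)).filter x).map (ofSet {·}),
    List.cons_ne_nil _ _, ?_, fun n hn => ?_⟩
  · simp only [List.forall_mem_cons, List.forall_mem_map, List.mem_filter]
    refine ⟨ofSet_inter_Ioi_mem_generatingSet hI hD hDh hx hxD, fun k hk => ?_⟩
    exact ofSet_singleton_mem_generatingSet (hI x hx _ (by simpa using hk.2)) (hD₀ k)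
  · simp only [Set.mem_iUnion, exists_prop, List.mem_cons, List.mem_map, List.mem_filter,
      List.mem_range]
    rcases le_or_gt n m with h | h
    · exact ⟨ofSet {n}, Or.inr ⟨n, ⟨Nat.lt_succ_of_le h, hn⟩, rfl⟩, by simp⟩
    · exact ⟨_, Or.inl rfl, by simpa using ⟨hn, h⟩⟩

end GeneratingSet

/-- Every `Fσ` ideal on `ℕ` is generated by a closed subset of the Cantor space. -/
theorem fsigma_ideal_generated_by_closed (I : Set Cantor) (hI : IsIdeal I)
    (hFs : IsFsigma I) :
    ∃ K : Set Cantor, IsClosed K ∧ I = IdealGen K := by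
  obtain ⟨C, hC, rfl⟩ := hFs
  rcases (⋃ n, C n).eq_empty_or_nonempty with hI₀ | hne
  · exact ⟨∅, isClosed_empty, by rw [hI₀, idealGen_empty]⟩
  have h₀ : ofSet ∅ ∈ ⋃ n, C n := by
    obtain ⟨y, hy⟩ := hne
    exact hI.hereditary y hy _ (by simp)
  let D n := Down (insert (ofSet ∅) (⋃ i ≤ n, C i))
  have hDI n : D n ⊆ ⋃ n, C n := hI.hereditary.down_subset <|
    Set.insert_subset h₀ (Set.iUnion₂_subset fun i _ => Set.subset_iUnion C i)
  have hD : Monotone D := fun m n hmn =>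
    down_mono (Set.insert_subset_insert (Set.biUnion_subset_biUnion_left fun _ h => le_trans h hmn))
  refine ⟨generatingSet _ D, isClosed_generatingSet fun n => ?_,
    subset_antisymm (fun x hx => ?_) (hI.idealGen_subset (generatingSet_subset hI hne hDI))⟩
  · exact (isClosed_singleton.union ((Set.finite_Iic n).isClosed_biUnion fun i _ => hC i)).down
  · obtain ⟨m, hm⟩ := Set.mem_iUnion.1 hx
    exact mem_idealGen_generatingSet hI.hereditary hD (fun _ => hereditary_down)
      (fun _ => subset_down (Set.mem_insert _ _)) hx
      (subset_down (Set.mem_insert_of_mem _ (Set.mem_biUnion (Set.mem_Iic.2 le_rfl) hm)))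
end

section
/- Let K ⊆ 2^ℕ be closed and suppose the ideal I_K generated by K is tall. Then I_K has a Borel selector if and only if there is a Borel selector S' for I_K such that S'(x) ∈ ↓K for every x ⊆ ℕ. -/
open Set

open scoped Classical
namespace CovSel

def ext (k i : ℕ) (z : Cantor) : Cantor := fun n => z (k * n + i)

def Cov (K : Set Cantor) (k : ℕ) (u : List Bool) (a : Cantor) : Set Cantor :=
  {z | (∀ i < k, ext k i z ∈ K) ∧ (∀ i < u.length, z i = u.getD i false) ∧
    ∀ n, a n = true → ∃ i < k, z (k * n + i) = true}

def CovFin (K : Set Cantor) (k : ℕ) (u : List Bool) (m : ℕ) (a : Cantor) : Set Cantor :=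
  {z | (∀ i < k, ext k i z ∈ K) ∧ (∀ i < u.length, z i = u.getD i false) ∧
    ∀ n ≤ m, a n = true → ∃ i < k, z (k * n + i) = true}

lemma continuous_ext (k i : ℕ) : Continuous (ext k i) :=
  continuous_pi fun n => continuous_apply (k * n + i)

lemma isClosed_apply (j : ℕ) (b : Bool) : IsClosed {z : Cantor | z j = b} := by
  have : {z : Cantor | z j = b} = (fun z : Cantor => z j) ⁻¹' {b} := rfl
  rw [this]
  exact (isClosed_discrete ({b} : Set Bool)).preimage (continuous_apply j)

lemma isClosed_exlt (k c : ℕ) : IsClosed {z : Cantor | ∃ i < k, z (c + i) = true} := by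
  have : {z : Cantor | ∃ i < k, z (c + i) = true} =
      ⋃ i ∈ Finset.range k, {z : Cantor | z (c + i) = true} := by
    ext z; simp
  rw [this]
  exact Set.Finite.isClosed_biUnion (Finset.range k).finite_toSet
    (fun i _ => isClosed_apply _ _)

lemma isClosed_Cov {K : Set Cantor} (hK : IsClosed K) (k : ℕ) (u : List Bool) (a : Cantor) :
    IsClosed (Cov K k u a) := by
  have : Cov K k u a =
      (⋂ i, ⋂ (_ : i < k), ext k i ⁻¹' K) ∩
      ((⋂ i, ⋂ (_ : i < u.length), {z : Cantor | z i = u.getD i false}) ∩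
       (⋂ n, ⋂ (_ : a n = true), {z : Cantor | ∃ i < k, z (k * n + i) = true})) := by
    ext z; simp [Cov, Set.mem_iInter]
  rw [this]
  refine ((isClosed_iInter fun i => isClosed_iInter fun _ => (hK.preimage (continuous_ext k i)))).inter
    (IsClosed.inter ?_ ?_)
  · exact isClosed_iInter fun i => isClosed_iInter fun _ => isClosed_apply _ _
  · exact isClosed_iInter fun n => isClosed_iInter fun _ => isClosed_exlt _ _

lemma isClosed_CovFin {K : Set Cantor} (hK : IsClosed K) (k : ℕ) (u : List Bool) (m : ℕ)
    (a : Cantor) : IsClosed (CovFin K k u m a) := by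
  have : CovFin K k u m a =
      (⋂ i, ⋂ (_ : i < k), ext k i ⁻¹' K) ∩
      ((⋂ i, ⋂ (_ : i < u.length), {z : Cantor | z i = u.getD i false}) ∩
       (⋂ n, ⋂ (_ : n ≤ m), ⋂ (_ : a n = true), {z : Cantor | ∃ i < k, z (k * n + i) = true})) := by
    ext z; simp [CovFin, Set.mem_iInter]
  rw [this]
  refine ((isClosed_iInter fun i => isClosed_iInter fun _ => (hK.preimage (continuous_ext k i)))).inter
    (IsClosed.inter ?_ ?_)
  · exact isClosed_iInter fun i => isClosed_iInter fun _ => isClosed_apply _ _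
  · exact isClosed_iInter fun n => isClosed_iInter fun _ => isClosed_iInter fun _ => isClosed_exlt _ _

lemma cov_nonempty_of_covFin {K : Set Cantor} (hK : IsClosed K) {k : ℕ} {u : List Bool}
    {a : Cantor} (h : ∀ m, (CovFin K k u m a).Nonempty) : (Cov K k u a).Nonempty := by
  have hdec : ∀ m, CovFin K k u (m + 1) a ⊆ CovFin K k u m a := by
    rintro m z ⟨h1, h2, h3⟩
    exact ⟨h1, h2, fun n hn han => h3 n (hn.trans (Nat.le_succ m)) han⟩
  have hcl : ∀ m, IsClosed (CovFin K k u m a) := fun m => isClosed_CovFin hK k u m a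
  have hne := IsCompact.nonempty_iInter_of_sequence_nonempty_isCompact_isClosed
    (fun m => CovFin K k u m a) hdec h ((hcl 0).isCompact) hcl
  obtain ⟨z, hz⟩ := hne
  simp only [Set.mem_iInter] at hz
  exact ⟨z, (hz 0).1, (hz 0).2.1, fun n han => (hz n).2.2 n le_rfl han⟩

end CovSel

namespace CovSel

lemma measurableSet_determined (m : ℕ) (P : Cantor → Prop)
    (h : ∀ a b : Cantor, (∀ n ≤ m, a n = b n) → P a → P b) :
    MeasurableSet {a : Cantor | P a} := by
  have key : {a : Cantor | P a} =
      ⋃ v ∈ {v : Finset ℕ | P (fun n => decide (n ∈ v))},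
        {a : Cantor | ∀ n ≤ m, a n = decide (n ∈ v)} := by
    ext a
    simp only [Set.mem_setOf_eq, Set.mem_iUnion, exists_prop]
    constructor
    · intro ha
      refine ⟨(Finset.range (m + 1)).filter (fun n => a n = true), ?_, ?_⟩
      · refine h a _ (fun n hn => ?_) ha
        simp [Nat.lt_succ_iff, hn]
      · intro n hn
        simp [Nat.lt_succ_iff, hn]
    · rintro ⟨v, hv, hav⟩
      exact h _ a (fun n hn => (hav n hn).symm) hv
  rw [key]
  refine MeasurableSet.biUnion (Set.to_countable _) (fun v _ => ?_)
  have : {a : Cantor | ∀ n ≤ m, a n = decide (n ∈ v)} =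
      ⋂ n, ⋂ (_ : n ≤ m), (fun a : Cantor => a n) ⁻¹' {decide (n ∈ v)} := by
    ext a; simp [Set.mem_iInter]
  rw [this]
  exact MeasurableSet.iInter fun n => MeasurableSet.iInter fun _ =>
    (measurable_pi_apply n) trivial

lemma measurableSet_covFin_nonempty (K : Set Cantor) (k : ℕ) (u : List Bool) (m : ℕ) :
    MeasurableSet {a : Cantor | (CovFin K k u m a).Nonempty} := by
  refine measurableSet_determined m _ ?_
  rintro a b hab ⟨z, h1, h2, h3⟩
  exact ⟨z, h1, h2, fun n hn hbn => h3 n hn (by rw [hab n hn]; exact hbn)⟩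

lemma measurableSet_cov_nonempty {K : Set Cantor} (hK : IsClosed K) (k : ℕ) (u : List Bool) :
    MeasurableSet {a : Cantor | (Cov K k u a).Nonempty} := by
  have : {a : Cantor | (Cov K k u a).Nonempty} =
      ⋂ m, {a : Cantor | (CovFin K k u m a).Nonempty} := by
    ext a
    simp only [Set.mem_iInter, Set.mem_setOf_eq]
    constructor
    · rintro ⟨z, h1, h2, h3⟩ m
      exact ⟨z, h1, h2, fun n _ han => h3 n han⟩
    · exact fun h => cov_nonempty_of_covFin hK h
  rw [this]
  exact MeasurableSet.iInter fun m => measurableSet_covFin_nonempty K k u m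

noncomputable def pre (K : Set Cantor) (k : ℕ) (a : Cantor) : ℕ → List Bool
  | 0 => []
  | n + 1 => pre K k a n ++
      [if (Cov K k (pre K k a n ++ [false]) a).Nonempty then false else true]

@[simp] lemma length_pre (K : Set Cantor) (k : ℕ) (a : Cantor) (n : ℕ) :
    (pre K k a n).length = n := by
  induction n with
  | zero => rfl
  | succ n ih => simp [pre, ih]

noncomputable def leftmost (K : Set Cantor) (k : ℕ) (a : Cantor) : Cantor :=
  fun n => (pre K k a (n + 1)).getD n false

lemma pre_agree (K : Set Cantor) (k : ℕ) (a : Cantor) {m n : ℕ} (hmn : m ≤ n) :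
    ∀ i < m, (pre K k a n).getD i false = (pre K k a m).getD i false := by
  induction n with
  | zero =>
    intro i hi
    have hm : m = 0 := Nat.le_zero.mp hmn
    subst hm; exact absurd hi (Nat.not_lt_zero i)
  | succ n ih =>
    intro i hi
    rcases Nat.lt_or_ge m (n + 1) with hlt | hge
    · have hmn' : m ≤ n := Nat.lt_succ_iff.mp hlt
      have hstep : (pre K k a (n + 1)).getD i false = (pre K k a n).getD i false := by
        show (pre K k a n ++ _).getD i false = _
        exact List.getD_append _ _ _ i (by simp; omega)
      rw [hstep]; exact ih hmn' i hi
    · have : m = n + 1 := le_antisymm hmn hge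
      rw [this]

lemma leftmost_eq_pre (K : Set Cantor) (k : ℕ) (a : Cantor) {i n : ℕ} (hi : i < n) :
    leftmost K k a i = (pre K k a n).getD i false := by
  unfold leftmost
  exact (pre_agree K k a hi i (Nat.lt_succ_self i)).symm

end CovSel

namespace CovSel

lemma getD_concat_self (u : List Bool) (b : Bool) : (u ++ [b]).getD u.length false = b := by
  induction u with
  | nil => rfl
  | cons x xs ih => simpa using ih

lemma mem_cov_concat {K : Set Cantor} {k : ℕ} {u : List Bool} {a : Cantor} {z : Cantor}
    (hz : z ∈ Cov K k u a) : z ∈ Cov K k (u ++ [z u.length]) a := by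
  obtain ⟨h1, h2, h3⟩ := hz
  refine ⟨h1, ?_, h3⟩
  intro i hi
  simp only [List.length_append, List.length_singleton] at hi
  rcases Nat.lt_or_ge i u.length with h | h
  · rw [List.getD_append _ _ _ i h]; exact h2 i h
  · have : i = u.length := by omega
    subst this
    rw [getD_concat_self]

lemma cov_mono_nil {K : Set Cantor} {k : ℕ} {u : List Bool} {a : Cantor} :
    Cov K k u a ⊆ Cov K k [] a := by
  rintro z ⟨h1, _, h3⟩
  exact ⟨h1, fun i hi => absurd hi (by simp), h3⟩

lemma pre_nonempty {K : Set Cantor} {k : ℕ} {a : Cantor}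
    (h : (Cov K k [] a).Nonempty) : ∀ n, (Cov K k (pre K k a n) a).Nonempty := by
  intro n
  induction n with
  | zero => exact h
  | succ n ih =>
    show (Cov K k (pre K k a n ++ [_]) a).Nonempty
    by_cases hc : (Cov K k (pre K k a n ++ [false]) a).Nonempty
    · rw [if_pos hc]; exact hc
    · rw [if_neg hc]
      obtain ⟨z, hz⟩ := ih
      have hmem := mem_cov_concat hz
      have hlen : (pre K k a n).length = n := length_pre K k a n
      have : z (pre K k a n).length = true := by
        by_contra hfalse
        have : z (pre K k a n).length = false := by
          cases hzz : z (pre K k a n).length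
          · rfl
          · exact absurd hzz hfalse
        rw [this] at hmem
        exact hc ⟨z, hmem⟩
      rw [this] at hmem
      exact ⟨z, hmem⟩

lemma leftmost_mem {K : Set Cantor} (hK : IsClosed K) {k : ℕ} {a : Cantor}
    (h : (Cov K k [] a).Nonempty) : leftmost K k a ∈ Cov K k [] a := by
  have hne : ∀ n, (Cov K k (pre K k a n) a).Nonempty := pre_nonempty h
  choose w hw using hne
  have hcl : IsClosed (Cov K k [] a) := isClosed_Cov hK k [] a
  refine hcl.mem_of_tendsto (f := w) (b := Filter.atTop) ?_ ?_
  · rw [tendsto_pi_nhds]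
    intro i
    refine Filter.Tendsto.congr' ?_ (tendsto_const_nhds (x := leftmost K k a i))
    filter_upwards [Filter.eventually_ge_atTop (i + 1)] with n hn
    have h2 := (hw n).2.1 i (by simp; omega)
    rw [leftmost_eq_pre K k a (by omega : i < n)]
    exact h2.symm
  · filter_upwards with n
    exact cov_mono_nil (hw n)

end CovSel

namespace CovSel

lemma measurableSet_pre_eq {K : Set Cantor} (hK : IsClosed K) (k : ℕ) (n : ℕ) (u : List Bool) :
    MeasurableSet {a : Cantor | pre K k a n = u} := by
  induction n generalizing u with
  | zero =>
    by_cases h : ([] : List Bool) = u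
    · have : {a : Cantor | pre K k a 0 = u} = Set.univ := by
        ext a; simp [pre, h]
      rw [this]; exact MeasurableSet.univ
    · have : {a : Cantor | pre K k a 0 = u} = ∅ := by
        ext a; simp [pre, h]
      rw [this]; exact MeasurableSet.empty
  | succ n ih =>
    have key : {a : Cantor | pre K k a (n + 1) = u} =
        ⋃ v : List Bool,
          ({a : Cantor | pre K k a n = v} ∩
            (({a : Cantor | (Cov K k (v ++ [false]) a).Nonempty} ∩ {_a : Cantor | u = v ++ [false]}) ∪
             ({a : Cantor | (Cov K k (v ++ [false]) a).Nonempty}ᶜ ∩ {_a : Cantor | u = v ++ [true]}))) := by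
      ext a
      simp only [Set.mem_iUnion, Set.mem_inter_iff, Set.mem_union, Set.mem_setOf_eq,
        Set.mem_compl_iff]
      have hpre : pre K k a (n + 1) = pre K k a n ++
          [if (Cov K k (pre K k a n ++ [false]) a).Nonempty then false else true] := rfl
      constructor
      · intro ha
        refine ⟨pre K k a n, rfl, ?_⟩
        by_cases hc : (Cov K k (pre K k a n ++ [false]) a).Nonempty
        · left; exact ⟨hc, by rw [← ha, hpre, if_pos hc]⟩
        · right; exact ⟨hc, by rw [← ha, hpre, if_neg hc]⟩
      · rintro ⟨v, hv, hcase⟩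
        subst hv
        rcases hcase with ⟨hc, hu⟩ | ⟨hc, hu⟩
        · rw [hpre, if_pos hc]; exact hu.symm
        · rw [hpre, if_neg hc]; exact hu.symm
    rw [key]
    refine MeasurableSet.iUnion fun v => (ih v).inter (MeasurableSet.union ?_ ?_)
    · exact (measurableSet_cov_nonempty hK k (v ++ [false])).inter (MeasurableSet.const _)
    · exact (measurableSet_cov_nonempty hK k (v ++ [false])).compl.inter (MeasurableSet.const _)

lemma measurableSet_leftmost_eq {K : Set Cantor} (hK : IsClosed K) (k : ℕ) (m : ℕ) (b : Bool) :
    MeasurableSet {a : Cantor | leftmost K k a m = b} := by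
  have : {a : Cantor | leftmost K k a m = b} =
      ⋃ u ∈ {u : List Bool | u.getD m false = b}, {a : Cantor | pre K k a (m + 1) = u} := by
    ext a
    simp only [Set.mem_iUnion, Set.mem_setOf_eq, exists_prop, leftmost]
    exact ⟨fun h => ⟨pre K k a (m + 1), h, rfl⟩, fun ⟨u, hu, hau⟩ => by rw [hau]; exact hu⟩
  rw [this]
  exact MeasurableSet.biUnion (Set.to_countable _) fun u _ => measurableSet_pre_eq hK k (m + 1) u

lemma measurableSet_infinite {p : Cantor → ℕ → Prop}
    (h : ∀ n, MeasurableSet {a : Cantor | p a n}) :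
    MeasurableSet {a : Cantor | {n | p a n}.Infinite} := by
  have : {a : Cantor | {n | p a n}.Infinite} =
      ⋂ m, ⋃ n, ⋃ (_ : m < n), {a : Cantor | p a n} := by
    ext a
    simp only [Set.mem_iInter, Set.mem_iUnion, Set.mem_setOf_eq, exists_prop]
    constructor
    · intro ha m
      obtain ⟨n, hn, hmn⟩ := ha.exists_gt m
      exact ⟨n, hmn, hn⟩
    · intro ha
      exact Set.infinite_of_forall_exists_gt fun m => by
        obtain ⟨n, hmn, hn⟩ := ha m; exact ⟨n, hn, hmn⟩
  rw [this]
  exact MeasurableSet.iInter fun m => MeasurableSet.iUnion fun n =>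
    MeasurableSet.iUnion fun _ => h n

lemma measurableSet_sInf_eq (T : Cantor → Set ℕ) (h : ∀ j, MeasurableSet {a : Cantor | j ∈ T a})
    (v : ℕ) : MeasurableSet {a : Cantor | sInf (T a) = v} := by
  have key : ∀ a : Cantor, sInf (T a) = v ↔
      ((v ∈ T a ∨ (v = 0 ∧ ∀ j, j ∉ T a)) ∧ ∀ j < v, j ∉ T a) := by
    intro a
    by_cases hne : (T a).Nonempty
    · constructor
      · rintro rfl
        exact ⟨Or.inl (Nat.sInf_mem hne), fun j hj => Nat.notMem_of_lt_sInf hj⟩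
      · rintro ⟨hv | ⟨rfl, hall⟩, hlt⟩
        · exact le_antisymm (Nat.sInf_le hv) (by
            by_contra hc
            push_neg at hc
            exact hlt _ hc (Nat.sInf_mem hne))
        · obtain ⟨j, hj⟩ := hne; exact absurd hj (hall j)
    · rw [Set.not_nonempty_iff_eq_empty] at hne
      rw [hne]
      simp [Nat.sInf_empty, eq_comm]
  have hset : {a : Cantor | sInf (T a) = v} =
      ({a : Cantor | v ∈ T a} ∪ ((⋂ j, {a : Cantor | j ∈ T a}ᶜ) ∩ {_a : Cantor | v = 0})) ∩
        ⋂ j, ⋂ (_ : j < v), {a : Cantor | j ∈ T a}ᶜ := by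
    ext a
    rw [Set.mem_setOf_eq, key a]
    simp only [Set.mem_inter_iff, Set.mem_union, Set.mem_setOf_eq, Set.mem_iInter,
      Set.mem_compl_iff]
    tauto
  rw [hset]
  refine MeasurableSet.inter (MeasurableSet.union (h v)
    (MeasurableSet.inter (MeasurableSet.iInter fun j => (h j).compl) (MeasurableSet.const _)))
    (MeasurableSet.iInter fun j => MeasurableSet.iInter fun _ => (h j).compl)

end CovSel

namespace CovSel

noncomputable def kOf (K : Set Cantor) (a : Cantor) : ℕ :=
  sInf {k | 0 < k ∧ (Cov K k [] a).Nonempty}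

noncomputable def iOf (K : Set Cantor) (a : Cantor) : ℕ :=
  sInf {i | i < kOf K a ∧
    {n | a n = true ∧ leftmost K (kOf K a) a (kOf K a * n + i) = true}.Infinite}

noncomputable def refine (K : Set Cantor) (a : Cantor) : Cantor :=
  fun n => a n && leftmost K (kOf K a) a (kOf K a * n + iOf K a)

def toSet' (x : Cantor) : Set ℕ := {n | x n = true}

lemma toSet'_refine (K : Set Cantor) (a : Cantor) :
    toSet' (refine K a) =
      {n | a n = true ∧ leftmost K (kOf K a) a (kOf K a * n + iOf K a) = true} := by
  ext n; simp [toSet', refine, Bool.and_eq_true]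

/-- If `a` is covered by a nonempty list of members of `K`, then some `Cov K k [] a` is
nonempty. -/
lemma cov_nonempty_of_list {K : Set Cantor} {a : Cantor} {l : List Cantor} (hl : l ≠ [])
    (hlK : ∀ y ∈ l, y ∈ K) (hsub : toSet' a ⊆ ⋃ y ∈ l, toSet' y) :
    0 < l.length ∧ (Cov K l.length [] a).Nonempty := by
  have hk : 0 < l.length := List.length_pos_iff.mpr hl
  refine ⟨hk, ?_⟩
  set k := l.length with hkdef
  refine ⟨fun m => l.getD (m % k) (fun _ => false) (m / k), ?_, ?_, ?_⟩
  · intro i hi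
    have hext : ext k i (fun m => l.getD (m % k) (fun _ => false) (m / k)) =
        l.getD i (fun _ => false) := by
      funext n
      show l.getD ((k * n + i) % k) _ ((k * n + i) / k) = _
      have h1 : (k * n + i) % k = i := by
        rw [Nat.mul_add_mod]
        exact Nat.mod_eq_of_lt hi
      have h2 : (k * n + i) / k = n := by
        rw [Nat.add_comm, Nat.add_mul_div_left _ _ hk, Nat.div_eq_of_lt hi, Nat.zero_add]
      rw [h1, h2]
    rw [hext, List.getD_eq_getElem _ _ hi]
    exact hlK _ (List.getElem_mem hi)
  · intro i hi; exact absurd hi (by simp)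
  · intro n han
    have : (n : ℕ) ∈ ⋃ y ∈ l, toSet' y := hsub han
    simp only [Set.mem_iUnion, exists_prop] at this
    obtain ⟨y, hyl, hyn⟩ := this
    obtain ⟨i, hi, hgy⟩ := List.getElem_of_mem hyl
    refine ⟨i, hi, ?_⟩
    show l.getD ((k * n + i) % k) (fun _ => false) ((k * n + i) / k) = true
    have h1 : (k * n + i) % k = i := by
      rw [Nat.mul_add_mod]
      exact Nat.mod_eq_of_lt hi
    have h2 : (k * n + i) / k = n := by
      rw [Nat.add_comm, Nat.add_mul_div_left _ _ hk, Nat.div_eq_of_lt hi, Nat.zero_add]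
    rw [h1, h2, List.getD_eq_getElem _ _ hi, hgy]
    exact hyn

lemma kOf_spec {K : Set Cantor} {a : Cantor} (h : ∃ k, 0 < k ∧ (Cov K k [] a).Nonempty) :
    0 < kOf K a ∧ (Cov K (kOf K a) [] a).Nonempty :=
  Nat.sInf_mem h

/-- Main correctness of `refine`. -/
lemma refine_spec {K : Set Cantor} (hK : IsClosed K) {a : Cantor}
    (h : ∃ k, 0 < k ∧ (Cov K k [] a).Nonempty) :
    ∃ y ∈ K, toSet' (refine K a) ⊆ toSet' y ∧ toSet' (refine K a) ⊆ toSet' a ∧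
      ((toSet' a).Infinite → (toSet' (refine K a)).Infinite) := by
  obtain ⟨hkpos, hkne⟩ := kOf_spec (K := K) (a := a) h
  set k := kOf K a with hk
  have hz : leftmost K k a ∈ Cov K k [] a := leftmost_mem hK hkne
  set z := leftmost K k a with hzdef
  obtain ⟨hz1, _, hz3⟩ := hz
  set T : Set ℕ := {i | i < k ∧ {n | a n = true ∧ z (k * n + i) = true}.Infinite} with hT
  have hiOf : iOf K a = sInf T := rfl
  have hilt : iOf K a < k := by
    by_cases hTne : T.Nonempty
    · exact (Nat.sInf_mem hTne).1
    · rw [Set.not_nonempty_iff_eq_empty] at hTne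
      rw [hiOf, hTne, Nat.sInf_empty]
      exact hkpos
  refine ⟨ext k (iOf K a) z, hz1 _ hilt, ?_, ?_, ?_⟩
  · intro n hn
    rw [toSet'_refine] at hn
    exact hn.2
  · intro n hn
    rw [toSet'_refine] at hn
    exact hn.1
  · intro hainf
    have hcover : toSet' a = ⋃ i ∈ Finset.range k, {n | a n = true ∧ z (k * n + i) = true} := by
      ext n
      simp only [Set.mem_iUnion, Finset.mem_range, exists_prop, Set.mem_setOf_eq, toSet']
      constructor
      · intro han
        obtain ⟨i, hi, hzi⟩ := hz3 n han
        exact ⟨i, hi, han, hzi⟩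
      · rintro ⟨i, _, han, _⟩; exact han
    have hTne : T.Nonempty := by
      by_contra hc
      rw [Set.not_nonempty_iff_eq_empty] at hc
      have : (toSet' a).Finite := by
        rw [hcover]
        refine Set.Finite.biUnion (Finset.range k).finite_toSet (fun i hi => ?_)
        simp only [Finset.coe_sort_coe, Finset.mem_coe, Finset.mem_range] at hi
        by_contra hinf
        rw [← Set.not_infinite, not_not] at hinf
        have : i ∈ T := ⟨hi, hinf⟩
        rw [hc] at this
        exact this
      exact hainf this
    have himem := Nat.sInf_mem hTne
    rw [← hiOf] at himem
    rw [toSet'_refine]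
    exact himem.2
end CovSel

namespace CovSel

lemma measurableSet_apply_true (n : ℕ) : MeasurableSet {a : Cantor | a n = true} := by
  have : {a : Cantor | a n = true} = (fun a : Cantor => a n) ⁻¹' {true} := rfl
  rw [this]
  exact (measurable_pi_apply n) (show MeasurableSet ({true} : Set Bool) from trivial)

lemma measurableSet_kOf_eq {K : Set Cantor} (hK : IsClosed K) (k₀ : ℕ) :
    MeasurableSet {a : Cantor | kOf K a = k₀} := by
  refine measurableSet_sInf_eq _ (fun j => ?_) k₀
  have : {a : Cantor | j ∈ {k | 0 < k ∧ (Cov K k [] a).Nonempty}} =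
      {_a : Cantor | 0 < j} ∩ {a : Cantor | (Cov K j [] a).Nonempty} := rfl
  rw [this]
  exact (MeasurableSet.const _).inter (measurableSet_cov_nonempty hK j [])

lemma measurableSet_iOf_eq {K : Set Cantor} (hK : IsClosed K) (i₀ : ℕ) :
    MeasurableSet {a : Cantor | iOf K a = i₀} := by
  refine measurableSet_sInf_eq _ (fun j => ?_) i₀
  have key : {a : Cantor | j ∈ {i | i < kOf K a ∧
      {n | a n = true ∧ leftmost K (kOf K a) a (kOf K a * n + i) = true}.Infinite}} =
      ⋃ k₀, ({a : Cantor | kOf K a = k₀} ∩ ({_a : Cantor | j < k₀} ∩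
        {a : Cantor | {n | a n = true ∧ leftmost K k₀ a (k₀ * n + j) = true}.Infinite})) := by
    ext a
    simp only [Set.mem_iUnion, Set.mem_inter_iff, Set.mem_setOf_eq]
    constructor
    · rintro ⟨h1, h2⟩; exact ⟨kOf K a, rfl, h1, h2⟩
    · rintro ⟨k₀, hk₀, h1, h2⟩; subst hk₀; exact ⟨h1, h2⟩
  rw [key]
  refine MeasurableSet.iUnion fun k₀ => (measurableSet_kOf_eq hK k₀).inter
    ((MeasurableSet.const _).inter (measurableSet_infinite fun n => ?_))
  exact (measurableSet_apply_true n).inter (measurableSet_leftmost_eq hK k₀ (k₀ * n + j) true)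

lemma measurable_refine {K : Set Cantor} (hK : IsClosed K) : Measurable (refine K) := by
  refine measurable_pi_lambda _ fun n => ?_
  refine measurable_to_countable' fun b => ?_
  have htrue : MeasurableSet ((fun a => refine K a n) ⁻¹' {true}) := by
    have : (fun a => refine K a n) ⁻¹' {true} =
        ⋃ k₀, ⋃ i₀, ({a : Cantor | kOf K a = k₀} ∩ {a : Cantor | iOf K a = i₀} ∩
          ({a : Cantor | a n = true} ∩
           {a : Cantor | leftmost K k₀ a (k₀ * n + i₀) = true})) := by
      ext a
      simp only [Set.mem_preimage, Set.mem_singleton_iff, Set.mem_iUnion, Set.mem_inter_iff,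
        Set.mem_setOf_eq, refine, Bool.and_eq_true]
      constructor
      · rintro ⟨h1, h2⟩; exact ⟨kOf K a, iOf K a, ⟨rfl, rfl⟩, h1, h2⟩
      · rintro ⟨k₀, i₀, ⟨hk, hi⟩, h1, h2⟩; subst hk; subst hi; exact ⟨h1, h2⟩
    rw [this]
    exact MeasurableSet.iUnion fun k₀ => MeasurableSet.iUnion fun i₀ =>
      ((measurableSet_kOf_eq hK k₀).inter (measurableSet_iOf_eq hK i₀)).inter
        ((measurableSet_apply_true n).inter (measurableSet_leftmost_eq hK k₀ (k₀ * n + i₀) true))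
  cases b
  · have : (fun a => refine K a n) ⁻¹' {false} = ((fun a => refine K a n) ⁻¹' {true})ᶜ := by
      ext a
      simp only [Set.mem_preimage, Set.mem_singleton_iff, Set.mem_compl_iff]
      cases h : refine K a n <;> simp
    rw [this]
    exact htrue.compl
  · exact htrue

end CovSel



/-- For closed `K` generating a tall ideal `I_K`: `I_K` has a Borel selector iff it has a
Borel selector taking values in `↓K`. -/
theorem selector_iff_selector_into_downK (K : Set Cantor) (hclosed : IsClosed K)
    (htall : Tall (IdealGen K)) :
    (∃ S : Cantor → Cantor, IsSelector (IdealGen K) S) ↔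
    (∃ S' : Cantor → Cantor, IsSelector (IdealGen K) S' ∧ ∀ x : Cantor, S' x ∈ Down K) := by
  constructor
  · rintro ⟨S, hSm, hS⟩
    refine ⟨fun x => CovSel.refine K (S x),
      ⟨(CovSel.measurable_refine hclosed).comp hSm, fun x => ?_⟩, fun x => ?_⟩ <;>
    · have ha : S x ∈ IdealGen K := (hS x).2.2
      obtain ⟨l, hl, hlK, hsub⟩ := ha
      have hex : ∃ k, 0 < k ∧ (CovSel.Cov K k [] (S x)).Nonempty :=
        ⟨l.length, CovSel.cov_nonempty_of_list hl hlK hsub⟩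
      obtain ⟨y, hyK, hsuby, hsuba, hinf⟩ := CovSel.refine_spec hclosed hex
      first
      | -- selector properties
        refine ⟨fun n hn => (hS x).1 (hsuba hn), fun hxinf => hinf ((hS x).2.1 hxinf), ?_⟩
        refine ⟨[y], by simp, by simp [hyK], ?_⟩
        intro n hn
        simp only [List.mem_singleton, Set.iUnion_iUnion_eq_left]
        exact hsuby hn
      | -- value in Down K
        exact ⟨y, hyK, hsuby⟩
  · rintro ⟨S', hS', _⟩
    exact ⟨S', hS'⟩
end

section
/- Let B be a front on ℕ, let B̄ = {s : s ⊑ t for some t ∈ B}, let F ⊆ B̄, let F̄ = {s : s ⊑ t for some t ∈ F}, and let F̂ = {s : there exist t ∈ F and t' ∈ B with t ⊑ s ⊑ t'}. Then an infinite set x ⊆ ℕ is F-homogeneous if and only if either no finite subset of x belongs to F, or every finite subset of x belonging to B̄ belongs to F̄ ∪ F̂. -/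
open Set

lemma initSegF_coe (s t : Finset ℕ) :
    InitSegF s t ↔ ∃ n : ℕ, (s : Set ℕ) = (t : Set ℕ) ∩ Set.Iic n := by
  unfold InitSegF
  constructor
  · rintro ⟨n, rfl⟩
    exact ⟨n, by simp⟩
  · rintro ⟨n, h⟩
    refine ⟨n, Finset.coe_injective ?_⟩
    simpa using h

lemma initSegF_refl (s : Finset ℕ) : InitSegF s s := by
  refine ⟨s.sup id, ?_⟩
  ext k
  simp only [Finset.mem_inter, Finset.mem_Iic]
  exact ⟨fun hk => ⟨hk, Finset.le_sup (f := id) hk⟩, fun h => h.1⟩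

lemma initSegF_of_initSeg {s t : Finset ℕ} {z : Set ℕ} {n m : ℕ}
    (hs : (s : Set ℕ) = z ∩ Set.Iic n) (ht : (t : Set ℕ) = z ∩ Set.Iic m)
    (hnm : n ≤ m) : InitSegF s t := by
  rw [initSegF_coe]
  refine ⟨n, ?_⟩
  rw [hs, ht]
  ext k
  simp only [Set.mem_inter_iff, Set.mem_Iic]
  constructor
  · rintro ⟨hz, hk⟩; exact ⟨⟨hz, hk.trans hnm⟩, hk⟩
  · rintro ⟨⟨hz, _⟩, hk⟩; exact ⟨hz, hk⟩

lemma initSegF_trans {s t u : Finset ℕ} (h1 : InitSegF s t) (h2 : InitSegF t u) :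
    InitSegF s u := by
  rw [initSegF_coe] at h1 h2 ⊢
  obtain ⟨n, hn⟩ := h1
  obtain ⟨m, hm⟩ := h2
  refine ⟨min n m, ?_⟩
  rw [hn, hm]
  ext k
  simp only [Set.mem_inter_iff, Set.mem_Iic, le_min_iff]
  tauto

lemma initSegF_antisymm {s t : Finset ℕ} (h1 : InitSegF s t) (h2 : InitSegF t s) :
    s = t := by
  obtain ⟨n, hn⟩ := h1
  obtain ⟨m, hm⟩ := h2
  apply Finset.Subset.antisymm
  · rw [hn]; exact Finset.inter_subset_left
  · rw [hm]; exact Finset.inter_subset_left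

lemma initSeg_of_initSegF {s t : Finset ℕ} {z : Set ℕ} (h1 : InitSegF s t)
    (h2 : InitSeg t z) : InitSeg s z := by
  rw [initSegF_coe] at h1
  obtain ⟨n, hn⟩ := h1
  obtain ⟨m, hm⟩ := h2
  refine ⟨min n m, ?_⟩
  rw [hn, hm]
  ext k
  simp only [Set.mem_inter_iff, Set.mem_Iic, le_min_iff]
  tauto

/-- Let `B` be a front on `ℕ` and `F ⊆ B̄`. An infinite `x ⊆ ℕ` is `F`-homogeneous iff
either no finite subset of `x` belongs to `F`, or every finite subset of `x` belonging
to `B̄` belongs to `F̄ ∪ F̂`, where `F̂ = {s : t ⊑ s ⊑ t' for some t ∈ F, t' ∈ B}`. -/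
theorem homog_iff_via_front (B : Set (Finset ℕ)) (hB : IsFrontOn B Set.univ)
    (F : Set (Finset ℕ)) (hF : ∀ s ∈ F, ∃ t ∈ B, InitSegF s t)
    (x : Set ℕ) (hx : x.Infinite) :
    Homog F x ↔
      ((∀ s : Finset ℕ, (s : Set ℕ) ⊆ x → s ∉ F) ∨
       (∀ s : Finset ℕ, (s : Set ℕ) ⊆ x → (∃ t ∈ B, InitSegF s t) →
         ((∃ t ∈ F, InitSegF s t) ∨
          (∃ t ∈ F, ∃ t' ∈ B, InitSegF t s ∧ InitSegF s t')))) := by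
  obtain ⟨-, hinc, hfront⟩ := hB
  have key : (∀ z : Set ℕ, z ⊆ x → z.Infinite → ∃ s ∈ F, InitSeg s z) ↔
      (∀ s : Finset ℕ, (s : Set ℕ) ⊆ x → (∃ t ∈ B, InitSegF s t) →
        ((∃ t ∈ F, InitSegF s t) ∨
         (∃ t ∈ F, ∃ t' ∈ B, InitSegF t s ∧ InitSegF s t'))) := by
    constructor
    · intro hA s hsx ⟨t', ht'B, hst'⟩
      set N := s.sup id with hN
      set z : Set ℕ := (s : Set ℕ) ∪ (x \ Set.Iic N) with hz
      have hzx : z ⊆ x := by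
        rintro k (hk | hk)
        · exact hsx hk
        · exact hk.1
      have hzinf : z.Infinite := by
        refine Set.Infinite.mono (Set.subset_union_right) (hx.diff ?_)
        exact Set.finite_Iic N
      have hsz : (s : Set ℕ) = z ∩ Set.Iic N := by
        ext k
        simp only [hz, Set.mem_inter_iff, Set.mem_union, Set.mem_diff, Set.mem_Iic]
        constructor
        · intro hk
          exact ⟨Or.inl hk, Finset.le_sup (f := id) hk⟩
        · rintro ⟨hk | hk, hkN⟩
          · exact hk
          · exact absurd hkN hk.2
      obtain ⟨u, huF, m, hu⟩ := hA z hzx hzinf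
      rcases le_total m N with hmN | hNm
      · exact Or.inr ⟨u, huF, t', ht'B, initSegF_of_initSeg hu hsz hmN, hst'⟩
      · exact Or.inl ⟨u, huF, initSegF_of_initSeg hsz hu hNm⟩
    · intro hC z hzx hzinf
      obtain ⟨t', ht'B, ht'z⟩ := hfront z (Set.subset_univ z) hzinf
      have ht'x : (t' : Set ℕ) ⊆ x := by
        obtain ⟨n, hn⟩ := ht'z
        rw [hn]
        exact (Set.inter_subset_left).trans hzx
      rcases hC t' ht'x ⟨t', ht'B, initSegF_refl t'⟩ with ⟨t, htF, hseg⟩ |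
          ⟨t, htF, t'', ht''B, h1, h2⟩
      · -- t' ⊑ t ∈ F; t ⊑ t'' ∈ B; then t' = t'' and t = t'
        obtain ⟨t'', ht''B, htt''⟩ := hF t htF
        have : t' = t'' := hinc t' ht'B t'' ht''B (initSegF_trans hseg htt'')
        subst this
        have : t = t' := initSegF_antisymm htt'' hseg
        exact ⟨t', by rwa [this] at htF, ht'z⟩
      · have : t' = t'' := hinc t' ht'B t'' ht''B h2
        exact ⟨t, htF, initSeg_of_initSegF h1 ht'z⟩
  unfold Homog
  rw [key]
  exact or_comm
end

section
/- Let X be a compact metric space and let (x_n)_{n∈ℕ} be a sequence whose range is dense in X. Then there is a coloring c of the two-element subsets of ℕ with two colors such that for every infinite set H ⊆ ℕ on whose pairs c is constant, the subsequence (x_n)_{n∈H} converges in X. -/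
open Set

/-- Lexicographic (non-strict) order on `ℕ → ℕ`. -/
private def Lle (f g : ℕ → ℕ) : Prop :=
  f = g ∨ ∃ k, (∀ j < k, f j = g j) ∧ f k < g k

private lemma Lle_refl (f : ℕ → ℕ) : Lle f f := Or.inl rfl

private lemma Lle_total {f g : ℕ → ℕ} (h : ¬ Lle f g) : Lle g f := by
  classical
  have hne : f ≠ g := fun e => h (Or.inl e)
  have hex : ∃ k, f k ≠ g k := by
    by_contra hc
    push_neg at hc
    exact hne (funext hc)
  have hk : f (Nat.find hex) ≠ g (Nat.find hex) := Nat.find_spec hex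
  have hpre : ∀ j < Nat.find hex, f j = g j := fun j hj =>
    not_ne_iff.mp (Nat.find_min hex hj)
  rcases lt_or_gt_of_ne hk with hlt | hgt
  · exact absurd (Or.inr ⟨Nat.find hex, hpre, hlt⟩) h
  · exact Or.inr ⟨Nat.find hex, fun j hj => (hpre j hj).symm, hgt⟩

private lemma anti_stab (f : ℕ → ℕ) (hf : ∀ k l, k ≤ l → f l ≤ f k) :
    ∃ K, ∀ k, K ≤ k → f k = f K := by
  obtain ⟨K, hK⟩ : sInf (Set.range f) ∈ Set.range f :=
    Nat.sInf_mem (Set.range_nonempty f)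
  exact ⟨K, fun k hk =>
    le_antisymm (hf K k hk) (hK ▸ Nat.sInf_le ⟨k, rfl⟩)⟩

private lemma mono_stab (f : ℕ → ℕ) (N : ℕ) (hb : ∀ k, f k ≤ N)
    (hf : ∀ k l, k ≤ l → f k ≤ f l) : ∃ K, ∀ k, K ≤ k → f k = f K := by
  obtain ⟨K, hK⟩ := anti_stab (fun k => N - f k)
    (fun k l h => Nat.sub_le_sub_left (hf k l h) N)
  refine ⟨K, fun k hk => ?_⟩
  have h1 := hK k hk
  have h2 := hb k
  have h3 := hb K
  omega

private lemma lex_stab (y : ℕ → ℕ → ℕ) (bnd : ∀ j, ∃ N, ∀ k, y k j ≤ N)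
    (mono : (∀ k l, k ≤ l → Lle (y k) (y l)) ∨ (∀ k l, k ≤ l → Lle (y l) (y k))) :
    ∀ j, ∃ K, ∀ k, K ≤ k → ∀ j' < j, y k j' = y K j' := by
  intro j
  induction j with
  | zero => exact ⟨0, fun k _ j' hj' => absurd hj' (Nat.not_lt_zero _)⟩
  | succ j ih =>
    obtain ⟨K, hK⟩ := ih
    have cmp : ∀ k l, K ≤ k → K ≤ l → Lle (y k) (y l) → y k j ≤ y l j := by
      intro k l hk hl h
      rcases h with heq | ⟨k0, hpre, hlt⟩
      · rw [heq]
      · rcases lt_trichotomy k0 j with h0 | h0 | h0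
        · exfalso
          have e1 : y k k0 = y K k0 := hK k hk k0 h0
          have e2 : y l k0 = y K k0 := hK l hl k0 h0
          omega
        · subst h0; exact hlt.le
        · exact (hpre j h0).le
    obtain ⟨N, hN⟩ := bnd j
    have key : ∃ K', ∀ m, K' ≤ m → y (K + m) j = y (K + K') j := by
      rcases mono with hm | hm
      · exact mono_stab (fun m => y (K + m) j) N (fun m => hN _)
          (fun m l h => cmp (K + m) (K + l) (Nat.le_add_right _ _)
            (Nat.le_add_right _ _) (hm _ _ (by omega)))
      · exact anti_stab (fun m => y (K + m) j)
          (fun m l h => cmp (K + l) (K + m) (Nat.le_add_right _ _)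
            (Nat.le_add_right _ _) (hm _ _ (by omega)))
    obtain ⟨K', hK'⟩ := key
    refine ⟨K + K', fun k hk j' hj' => ?_⟩
    rcases Nat.lt_or_ge j' j with h' | h'
    · rw [hK k (by omega) j' h', hK (K + K') (by omega) j' h']
    · have : j' = j := by omega
      subst this
      have hkk : k = K + (k - K) := by omega
      rw [hkk, hK' (k - K) (by omega)]
/-- For a dense sequence `(x_n)` in a compact metric space there is a coloring `c` of
pairs of naturals such that along every infinite `c`-homogeneous set `H` the subsequence
`(x_n)_{n ∈ H}` converges. -/
theorem coloring_for_convergent_subsequences (X : Type*) [MetricSpace X] [CompactSpace X]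
    (x : ℕ → X) (hdense : Dense (Set.range x)) :
    ∃ c : ℕ → ℕ → Bool, (∀ m n : ℕ, c m n = c n m) ∧
      ∀ H : Set ℕ, H.Infinite →
        (∃ i : Bool, ∀ m ∈ H, ∀ n ∈ H, m ≠ n → c m n = i) →
        ∃ L : X, Filter.Tendsto (fun k => x (Nat.nth (· ∈ H) k)) Filter.atTop (nhds L) := by
  classical
  have hex : ∀ n j : ℕ, ∃ i, dist (x n) (x i) < (1/2 : ℝ)^j := fun n j =>
    ⟨n, by rw [dist_self]; positivity⟩
  set a : ℕ → ℕ → ℕ := fun n j => Nat.find (hex n j) with ha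
  have ha_spec : ∀ n j, dist (x n) (x (a n j)) < (1/2:ℝ)^j := fun n j => Nat.find_spec (hex n j)
  have ha_le : ∀ n j i, dist (x n) (x i) < (1/2:ℝ)^j → a n j ≤ i := fun n j i h =>
    Nat.find_le h
  -- finitely many possible values at each level
  have hbnd : ∀ j, ∃ N, ∀ n, a n j ≤ N := by
    intro j
    have hpos : (0:ℝ) < (1/2)^j/2 := by positivity
    obtain ⟨t, -, hfin, hcov⟩ := finite_cover_balls_of_compact (isCompact_univ (X := X)) hpos
    have hc : ∀ y : X, ∃ i, dist y (x i) < (1/2:ℝ)^j/2 := by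
      intro y
      obtain ⟨z, ⟨i, rfl⟩, hz⟩ := hdense.exists_dist_lt y hpos
      exact ⟨i, hz⟩
    refine ⟨hfin.toFinset.sup (fun y => (hc y).choose), fun n => ?_⟩
    have hmem : x n ∈ ⋃ y ∈ t, Metric.ball y ((1/2:ℝ)^j/2) := hcov (Set.mem_univ _)
    obtain ⟨y, hy, hxy⟩ := Set.mem_iUnion₂.mp hmem
    have h1 : dist (x n) (x ((hc y).choose)) < (1/2:ℝ)^j := by
      have := (hc y).choose_spec
      have hd : dist (x n) y < (1/2:ℝ)^j/2 := Metric.mem_ball.mp hxy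
      calc dist (x n) (x ((hc y).choose)) ≤ dist (x n) y + dist y (x ((hc y).choose)) :=
            dist_triangle _ _ _
        _ < (1/2:ℝ)^j/2 + (1/2:ℝ)^j/2 := by linarith
        _ = (1/2:ℝ)^j := by ring
    exact le_trans (ha_le n j _ h1) (Finset.le_sup (f := fun y => (hc y).choose) (hfin.mem_toFinset.mpr hy))
  have hclose : ∀ m n j, a m j = a n j → dist (x m) (x n) < 2*(1/2:ℝ)^j := by
    intro m n j h
    have h1 := ha_spec m j
    have h2 := ha_spec n j
    rw [h] at h1
    calc dist (x m) (x n) ≤ dist (x m) (x (a n j)) + dist (x (a n j)) (x n) :=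
          dist_triangle _ _ _
      _ = dist (x m) (x (a n j)) + dist (x n) (x (a n j)) := by rw [dist_comm (x (a n j))]
      _ < 2*(1/2:ℝ)^j := by linarith
  refine ⟨fun m n => decide (Lle (a (min m n)) (a (max m n))), ?_, ?_⟩
  · intro m n
    simp only [Nat.min_comm m n, Nat.max_comm m n]
  · rintro H hH ⟨i, hi⟩
    set e : ℕ → ℕ := fun k => Nat.nth (· ∈ H) k with he
    have he_mem : ∀ k, e k ∈ H := fun k => Nat.nth_mem_of_infinite hH k
    have he_mono : StrictMono e := Nat.nth_strictMono hH
    set y : ℕ → ℕ → ℕ := fun k => a (e k) with hy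
    have hmono : (∀ k l, k ≤ l → Lle (y k) (y l)) ∨ (∀ k l, k ≤ l → Lle (y l) (y k)) := by
      cases i with
      | true =>
        left
        intro k l hkl
        rcases eq_or_lt_of_le hkl with rfl | hlt
        · exact Lle_refl _
        · have hel : e k < e l := he_mono hlt
          have := hi (e k) (he_mem k) (e l) (he_mem l) (ne_of_lt hel)
          simp only [min_eq_left hel.le, max_eq_right hel.le] at this
          exact of_decide_eq_true this
      | false =>
        right
        intro k l hkl
        rcases eq_or_lt_of_le hkl with rfl | hlt
        · exact Lle_refl _
        · have hel : e k < e l := he_mono hlt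
          have := hi (e k) (he_mem k) (e l) (he_mem l) (ne_of_lt hel)
          simp only [min_eq_left hel.le, max_eq_right hel.le] at this
          exact Lle_total (of_decide_eq_false this)
    have stab := lex_stab y (fun j => (hbnd j).imp (fun N hN k => hN (e k))) hmono
    have hcauchy : CauchySeq (fun k => x (e k)) := by
      rw [Metric.cauchySeq_iff']
      intro ε hε
      obtain ⟨j, hj⟩ := exists_pow_lt_of_lt_one (by linarith : (0:ℝ) < ε/2)
        (by norm_num : (1/2:ℝ) < 1)
      obtain ⟨K, hK⟩ := stab (j+1)
      refine ⟨K, fun k hk => ?_⟩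
      have heq : y k j = y K j := hK k hk j (Nat.lt_succ_self j)
      have := hclose (e k) (e K) j heq
      linarith
    obtain ⟨L, hL⟩ := cauchySeq_tendsto_of_complete hcauchy
    exact ⟨L, hL⟩
end

section
/- Let (X,τ) be a countable regular Hausdorff topological space without isolated points. Then there is a coloring c of the two-element subsets of X with two colors such that every c-homogeneous subset of X is nowhere dense in (X,τ). -/
open Set

/-- In a countable regular Hausdorff space, a point can be separated from a finite set
not containing it by a clopen set. -/
lemma clopen_sep_of_finite {X : Type*} [TopologicalSpace X] [Countable X]
    [RegularSpace X] [T2Space X] (x : X) (F : Set X) (hF : F.Finite) (hx : x ∉ F) :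
    ∃ W : Set X, IsClopen W ∧ x ∈ W ∧ ∀ y ∈ F, y ∉ W := by
  have hFc : IsClosed F := hF.isClosed
  have hd : Disjoint ({x} : Set X) F := by simpa [Set.disjoint_singleton_left] using hx
  obtain ⟨f, hf0, hf1, hficc⟩ :=
    exists_continuous_zero_one_of_isClosed isClosed_singleton hFc hd
  have hrng : (Set.range f).Countable := Set.countable_range f
  have hnotsub : ¬ (Set.Ioo (0:ℝ) 1 ⊆ Set.range f) := by
    intro hsub
    have h1 : (Set.Ioo (0:ℝ) 1).Countable := hrng.mono hsub
    have h2 := h1.le_aleph0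
    rw [Cardinal.mk_Ioo_real (by norm_num : (0:ℝ) < 1)] at h2
    exact absurd h2 Cardinal.aleph0_lt_continuum.not_ge
  obtain ⟨r, hr, hrn⟩ := Set.not_subset.mp hnotsub
  have hpre : f ⁻¹' Set.Iio r = f ⁻¹' Set.Iic r := by
    ext z
    simp only [Set.mem_preimage, Set.mem_Iio, Set.mem_Iic]
    constructor
    · exact le_of_lt
    · intro h
      refine lt_of_le_of_ne h fun hz => hrn ?_
      exact ⟨z, hz⟩
  refine ⟨f ⁻¹' Set.Iio r, ⟨?_, ?_⟩, ?_, ?_⟩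
  · rw [hpre]; exact isClosed_Iic.preimage f.continuous
  · exact isOpen_Iio.preimage f.continuous
  · simp only [Set.mem_preimage, Set.mem_Iio]
    rw [hf0 rfl]
    exact hr.1
  · intro y hy
    simp only [Set.mem_preimage, Set.mem_Iio]
    rw [hf1 hy]
    exact not_lt.mpr hr.2.le

/-- For a countable regular Hausdorff space without isolated points there is a coloring
`c` of pairs such that every `c`-homogeneous set is nowhere dense. -/
theorem coloring_homogeneous_nowhere_dense (X : Type*) [TopologicalSpace X] [Countable X]
    [RegularSpace X] [T2Space X] (hni : ∀ p : X, ¬ IsOpen ({p} : Set X)) :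
    ∃ c : X → X → Bool, (∀ a b : X, c a b = c b a) ∧
      ∀ H : Set X, (∃ i : Bool, ∀ a ∈ H, ∀ b ∈ H, a ≠ b → c a b = i) →
        IsNowhereDense H := by
  classical
  -- a nonempty finite open set would yield an isolated point
  have hfin : ∀ U : Set X, IsOpen U → U.Finite → U = ∅ := by
    intro U hU hUf
    by_contra hne
    obtain ⟨p, hp⟩ := Set.nonempty_iff_ne_empty.mpr hne
    have h1 : IsClosed (U \ {p}) := (hUf.subset Set.diff_subset).isClosed
    have h2 : IsOpen (U \ (U \ {p})) := hU.sdiff h1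
    have h3 : U \ (U \ {p}) = {p} := by
      ext z
      simp only [Set.mem_diff, Set.mem_singleton_iff]
      constructor
      · rintro ⟨hz, hz2⟩
        by_contra hzp
        exact hz2 ⟨hz, hzp⟩
      · rintro rfl
        exact ⟨hp, fun h => h.2 rfl⟩
    exact hni p (h3 ▸ h2)
  cases isEmpty_or_nonempty X with
  | inl hE =>
    refine ⟨fun _ _ => true, fun a b => rfl, fun H _ => ?_⟩
    have hH : H = ∅ := Set.eq_empty_of_isEmpty H
    show interior (closure H) = ∅
    simp [hH]
  | inr hN =>
    have hInf : Infinite X := by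
      by_contra hI
      have : Finite X := not_infinite_iff_finite.mp hI
      have hu : (Set.univ : Set X) = ∅ := hfin _ isOpen_univ Set.finite_univ
      exact (Set.univ_eq_empty_iff.mp hu).false hN.some
    obtain ⟨e⟩ : Nonempty (ℕ ≃ X) := nonempty_equiv_of_countable
    have hW : ∀ n : ℕ, ∃ W : Set X, IsClopen W ∧ e n ∈ W ∧ ∀ m < n, e m ∉ W := by
      intro n
      have hxn : e n ∉ e '' Set.Iio n := by
        rintro ⟨m, hm, hem⟩
        exact Nat.ne_of_lt hm (e.injective hem)
      obtain ⟨W, hc, hx, hd⟩ := clopen_sep_of_finite (e n) (e '' Set.Iio n)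
        ((Set.finite_Iio n).image e) hxn
      exact ⟨W, hc, hx, fun m hm hmem => hd (e m) ⟨m, hm, rfl⟩ hmem⟩
    choose W hWc hWx hWm using hW
    refine ⟨fun a b => if e.symm a ≤ e.symm b then decide (b ∈ W (e.symm a))
      else decide (a ∈ W (e.symm b)), ?_, ?_⟩
    · intro a b
      dsimp only
      rcases lt_trichotomy (e.symm a) (e.symm b) with h | h | h
      · rw [if_pos h.le, if_neg (not_le.mpr h)]
      · have hab : a = b := e.symm.injective h
        subst hab
        rfl
      · rw [if_neg (not_le.mpr h), if_pos h.le]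
    · rintro H ⟨i, hi⟩
      have key : ∀ m n : ℕ, m < n → e m ∈ H → e n ∈ H → decide (e n ∈ W m) = i := by
        intro m n hmn hm hn
        have hne : e m ≠ e n := fun h => Nat.ne_of_lt hmn (e.injective h)
        have h := hi (e m) hm (e n) hn hne
        simp only [Equiv.symm_apply_apply] at h
        rwa [if_pos hmn.le] at h
      by_cases hHf : H.Finite
      · have hcl : closure H = H := hHf.isClosed.closure_eq
        show interior (closure H) = ∅
        rw [hcl]
        exact hfin _ isOpen_interior (hHf.subset interior_subset)
      · have hHi : H.Infinite := hHf
        have hSinf : (e.symm '' H).Infinite :=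
          (Set.infinite_image_iff (e.symm.injective.injOn)).mpr hHi
        have hbig : ∀ k : ℕ, ∃ n, k < n ∧ e n ∈ H := by
          intro k
          obtain ⟨n, hn, hkn⟩ := hSinf.exists_gt k
          obtain ⟨a, haH, rfl⟩ := hn
          exact ⟨e.symm a, hkn, by simpa using haH⟩
        cases i with
        | false =>
          show interior (closure H) = ∅
          by_contra hne
          obtain ⟨z, hz⟩ := Set.nonempty_iff_ne_empty.mpr hne
          have hzc : z ∈ closure H := interior_subset hz
          obtain ⟨a, ha1, ha2⟩ : (interior (closure H) ∩ H).Nonempty := by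
            rw [mem_closure_iff] at hzc
            exact hzc _ isOpen_interior hz
          set m := e.symm a with hm
          have hea : e m = a := e.apply_symm_apply a
          have hmH : e m ∈ H := by rwa [hea]
          have hsub : H ∩ W m ⊆ e '' Set.Iic m := by
            rintro b ⟨hbH, hbW⟩
            set k := e.symm b with hk
            have heb : e k = b := e.apply_symm_apply b
            have hkH : e k ∈ H := by rwa [heb]
            by_contra hbk
            have hkm : m < k := by
              rcases le_or_gt k m with h | h
              · exact absurd ⟨k, h, heb⟩ hbk
              · exact h
            have hnot : ¬ (e k ∈ W m) := of_decide_eq_false (key m k hkm hmH hkH)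
            exact hnot (by rwa [heb])
          have hFfin : (H ∩ W m).Finite := ((Set.finite_Iic m).image e).subset hsub
          set U : Set X := (W m ∩ interior (closure H)) \ ((H ∩ W m) \ {a}) with hU
          have hUo : IsOpen U :=
            ((hWc m).2.inter isOpen_interior).sdiff (hFfin.subset Set.diff_subset).isClosed
          have haU : a ∈ U := by
            refine ⟨⟨by rw [← hea]; exact hWx m, ha1⟩, ?_⟩
            simp
          have hU'e : U \ {a} = ∅ := by
            by_contra hU'
            obtain ⟨w, hw⟩ := Set.nonempty_iff_ne_empty.mpr hU'
            have hwcl : w ∈ closure H := interior_subset hw.1.1.2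
            have hUo' : IsOpen (U \ {a}) := hUo.sdiff isClosed_singleton
            rw [mem_closure_iff] at hwcl
            obtain ⟨b, hb1, hb2⟩ := hwcl _ hUo' hw
            have hbHW : b ∈ (H ∩ W m) \ {a} := ⟨⟨hb2, hb1.1.1.1⟩, hb1.2⟩
            exact hb1.1.2 hbHW
          have hUa : U = {a} :=
            Set.Subset.antisymm (Set.diff_eq_empty.mp hU'e) (by simpa using haU)
          exact hni a (hUa ▸ hUo)
        | true =>
          have hmemW : ∀ m n : ℕ, m < n → e m ∈ H → e n ∈ H → e n ∈ W m := by
            intro m n hmn hm hn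
            exact of_decide_eq_true (key m n hmn hm hn)
          have hcl : closure H = H := by
            refine Set.Subset.antisymm ?_ subset_closure
            intro z hzc
            by_contra hzH
            set k := e.symm z with hk
            have hez : e k = z := e.apply_symm_apply z
            obtain ⟨n, hkn, hnH⟩ := hbig k
            have hHsub : H ⊆ W n ∪ e '' {j | j < n ∧ e j ∈ H} := by
              intro b hbH
              set j := e.symm b with hj
              have hejb : e j = b := e.apply_symm_apply b
              have hjH : e j ∈ H := by rwa [hejb]
              rcases lt_trichotomy j n with h | h | h
              · exact Or.inr ⟨j, ⟨h, hjH⟩, hejb⟩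
              · subst h
                exact Or.inl (by rw [← hejb]; exact hWx j)
              · exact Or.inl (by rw [← hejb]; exact hmemW n j h hnH hjH)
            have hclosed : IsClosed (W n ∪ e '' {j | j < n ∧ e j ∈ H}) :=
              (hWc n).1.union (((Set.finite_Iio n).subset fun j hj => hj.1).image e).isClosed
            have hzin : z ∈ W n ∪ e '' {j | j < n ∧ e j ∈ H} :=
              closure_minimal hHsub hclosed hzc
            rcases hzin with h | h
            · exact hWm n k hkn (by rwa [hez])
            · obtain ⟨j, hj, hjz⟩ := h
              exact hzH (hjz ▸ hj.2)
          show interior (closure H) = ∅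
          rw [hcl]
          by_contra hne
          obtain ⟨z, hz⟩ := Set.nonempty_iff_ne_empty.mpr hne
          have hzH : z ∈ H := interior_subset hz
          set k := e.symm z with hk
          have hez : e k = z := e.apply_symm_apply z
          have hkH : e k ∈ H := by rwa [hez]
          obtain ⟨n, hkn, hnH⟩ := hbig k
          set U : Set X := interior H \ W n with hU
          have hUo : IsOpen U := isOpen_interior.sdiff (hWc n).1
          have hzU : z ∈ U := ⟨hz, by rw [← hez]; exact hWm n k hkn⟩
          have hUsub : U ⊆ e '' Set.Iic n := by
            rintro b ⟨hbi, hbW⟩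
            have hbH : b ∈ H := interior_subset hbi
            set j := e.symm b with hj
            have hejb : e j = b := e.apply_symm_apply b
            have hjH : e j ∈ H := by rwa [hejb]
            by_contra hbk
            have hnj : n < j := by
              rcases le_or_gt j n with h | h
              · exact absurd ⟨j, h, hejb⟩ hbk
              · exact h
            exact hbW (by rw [← hejb]; exact hmemW n j hnj hnH hjH)
          have hUfin : U.Finite := ((Set.finite_Iic n).image e).subset hUsub
          have := hfin U hUo hUfin
          rw [this] at hzU
          exact hzU
end
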